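/- arXiv:1506.08631 — 3 statements merged into one kernel-verified Lean document; each statement's English description precedes it below -/
import Mathlib

section
/- For every integer d ≥ 1, ((1 + e^{-2/√d})/2)^d ≤ e^{-√d + 1}. -/
open Real

/-- Writing `(1 + e^{-2t}) / 2 = e^{-t} cosh t`, this is the sub-Gaussian bound `cosh t ≤ e^{t²/2}`. -/
lemma one_add_exp_neg_two_mul_div_two_le (t : ℝ) :
    (1 + exp (-2 * t)) / 2 ≤ exp (-t + t ^ 2 / 2) := by
  calc (1 + exp (-2 * t)) / 2 = exp (-t) * cosh t := by
        rw [cosh_eq, mul_div_assoc', mul_add, ← exp_add, ← exp_add, neg_add_cancel, exp_zero]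
        ring_nf
    _ ≤ exp (-t) * exp (t ^ 2 / 2) := by gcongr; exact cosh_le_exp_half_sq t
    _ = exp (-t + t ^ 2 / 2) := (exp_add _ _).symm

theorem return_prob_bound (d : ℕ) (hd : 1 ≤ d) :
    ((1 + Real.exp (-2 / Real.sqrt d)) / 2) ^ d ≤ Real.exp (-Real.sqrt d + 1) := by
  have hs : 0 < √(d : ℝ) := sqrt_pos.mpr (by exact_mod_cast hd)
  have hsq : √(d : ℝ) ^ 2 = d := sq_sqrt (Nat.cast_nonneg d)
  calc ((1 + exp (-2 / √d)) / 2) ^ d = ((1 + exp (-2 * (√d)⁻¹)) / 2) ^ d := by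
        rw [div_eq_mul_inv (-2 : ℝ)]
    _ ≤ exp (-(√d)⁻¹ + (√d)⁻¹ ^ 2 / 2) ^ d := by
        gcongr
        exact one_add_exp_neg_two_mul_div_two_le _
    _ = exp (-√d + 1 / 2) := by
        rw [← exp_nat_mul]
        congr 1
        field_simp
        rw [hsq]
    _ ≤ exp (-√d + 1) := by gcongr; norm_num
end

section
/- For every integer d ≥ 1, ∫₀^d h_d(s)^d ds ≤ 6, where h_d(s) = (1 + e^{-2s/d})(1 + e^{-2(d-s)/d})/(2(1+e^{-2})). -/
/-!
With `h(x) = (1 + e^{-2x})(1 + e^{-2(1-x)}) / (2(1 + e^{-2}))` we have `h_d(s) = h(s/d)`, and `h` is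
symmetric about `1/2`. On `[0, 1/2]` the chords of `exp` give `h(x) ≤ 1 - x/3 ≤ e^{-x/3}`, so
`h_d(s)^d ≤ e^{-s/3} + e^{-(d-s)/3}` on `[0, d]`, whose integral is at most `2 · 3`.
-/

open Real

lemma exp_le_chord (a b : ℝ) {t : ℝ} (ht₀ : 0 ≤ t) (ht₁ : t ≤ 1) :
    exp ((1 - t) * a + t * b) ≤ (1 - t) * exp a + t * exp b := by
  simpa using convexOn_exp.2 (Set.mem_univ a) (Set.mem_univ b) (sub_nonneg.2 ht₁) ht₀ (by ring)

lemma three_mul_exp_neg_one_le : 3 * exp (-1) ≤ 1 + exp (-2) := by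
  have hsq : exp (-2) = exp (-1) ^ 2 := by rw [← exp_nat_mul]; norm_num
  have hmul : exp (-1) * exp 1 = 1 := by rw [← exp_add]; simp
  nlinarith [exp_pos (-1), exp_one_gt_d9]

lemma integral_exp_neg_div (a : ℝ) {c : ℝ} (hc : c ≠ 0) :
    ∫ s in (0 : ℝ)..a, exp (-s / c) = c * (1 - exp (-a / c)) := by
  simp_rw [neg_div]
  rw [intervalIntegral.integral_comp_div (fun y => exp (-y)) hc,
    intervalIntegral.integral_comp_neg (fun y => exp y), integral_exp]
  simp

lemma integral_exp_neg_div_le (a : ℝ) {c : ℝ} (hc : 0 < c) :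
    ∫ s in (0 : ℝ)..a, exp (-s / c) ≤ c := by
  rw [integral_exp_neg_div a hc.ne']
  nlinarith [exp_pos (-a / c)]

lemma integral_exp_neg_sub_div (a c : ℝ) :
    ∫ s in (0 : ℝ)..a, exp (-(a - s) / c) = ∫ s in (0 : ℝ)..a, exp (-s / c) := by
  rw [intervalIntegral.integral_comp_sub_left (fun y => exp (-y / c)) a]
  simp

noncomputable def profile (x : ℝ) : ℝ :=
  (1 + exp (-2 * x)) * (1 + exp (-2 * (1 - x))) / (2 * (1 + exp (-2)))

@[fun_prop]
lemma continuous_profile : Continuous profile := by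
  unfold profile; fun_prop

lemma profile_nonneg (x : ℝ) : 0 ≤ profile x := by
  unfold profile; positivity

lemma profile_one_sub (x : ℝ) : profile (1 - x) = profile x := by
  rw [profile, profile, sub_sub_cancel, mul_comm (1 + exp _)]

/- The two chords give `profile x ≤ 1 - c x` with `c = (1 - e⁻¹)² / (1 + e⁻²)`,
and `c ≥ 1/3` is `three_mul_exp_neg_one_le`. -/
lemma profile_le_one_sub {x : ℝ} (hx₀ : 0 ≤ x) (hx : x ≤ 1 / 2) : profile x ≤ 1 - x / 3 := by
  have hleft : exp (-2 * x) ≤ (1 - 2 * x) + 2 * x * exp (-1) := by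
    simpa using exp_le_chord 0 (-1) (by linarith : 0 ≤ 2 * x) (by linarith)
  have hright : exp (-2 * (1 - x)) ≤ (1 - 2 * x) * exp (-2) + 2 * x * exp (-1) := by
    convert exp_le_chord (-2) (-1) (by linarith : 0 ≤ 2 * x) (by linarith) using 2; ring
  have hprod : exp (-2 * x) * exp (-2 * (1 - x)) = exp (-2) := by rw [← exp_add]; ring_nf
  rw [profile, div_le_iff₀ (by positivity)]
  nlinarith [three_mul_exp_neg_one_le]

lemma profile_le_exp {x : ℝ} (hx₀ : 0 ≤ x) (hx : x ≤ 1 / 2) : profile x ≤ exp (-x / 3) :=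
  (profile_le_one_sub hx₀ hx).trans (by linarith [add_one_le_exp (-x / 3)])

lemma profile_pow_le_exp (n : ℕ) {x : ℝ} (hx₀ : 0 ≤ x) (hx : x ≤ 1 / 2) :
    profile x ^ n ≤ exp (-(n * x) / 3) := by
  rw [show -(n * x) / 3 = n * (-x / 3) by ring, exp_nat_mul]
  exact pow_le_pow_left₀ (profile_nonneg x) (profile_le_exp hx₀ hx) n

lemma profile_pow_le_exp_add (n : ℕ) {x : ℝ} (hx₀ : 0 ≤ x) (hx₁ : x ≤ 1) :
    profile x ^ n ≤ exp (-(n * x) / 3) + exp (-(n * (1 - x)) / 3) := by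
  rcases le_total x (1 / 2) with hx | hx
  · linarith [profile_pow_le_exp n hx₀ hx, exp_pos (-(n * (1 - x)) / 3)]
  · have := profile_pow_le_exp n (x := 1 - x) (by linarith) (by linarith)
    rw [profile_one_sub] at this
    linarith [exp_pos (-(n * x) / 3)]

theorem integral_h_pow_le (d : ℕ) (hd : 1 ≤ d) :
    (∫ s in (0 : ℝ)..(d : ℝ),
        ((1 + Real.exp (-2 * s / d)) * (1 + Real.exp (-2 * ((d : ℝ) - s) / d))
          / (2 * (1 + Real.exp (-2)))) ^ d) ≤ 6 := by
  have hd₀ : (d : ℝ) ≠ 0 := by positivity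
  have h_eq : ∀ s : ℝ, (1 + exp (-2 * s / d)) * (1 + exp (-2 * ((d : ℝ) - s) / d))
      / (2 * (1 + exp (-2))) = profile (s / d) := by
    intro s; rw [profile]; field_simp
  simp_rw [h_eq]
  calc ∫ s in (0 : ℝ)..d, profile (s / d) ^ d
      ≤ ∫ s in (0 : ℝ)..d, (exp (-s / 3) + exp (-(d - s) / 3)) := by
        refine intervalIntegral.integral_mono_on (Nat.cast_nonneg d)
          ((by fun_prop : Continuous _).intervalIntegrable _ _)
          ((by fun_prop : Continuous _).intervalIntegrable _ _) fun s hs => ?_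
        have := profile_pow_le_exp_add d (div_nonneg hs.1 (Nat.cast_nonneg d))
          ((div_le_one₀ (by positivity)).2 hs.2)
        rwa [mul_div_cancel₀ s hd₀, mul_one_sub, mul_div_cancel₀ s hd₀] at this
    _ = 2 * ∫ s in (0 : ℝ)..d, exp (-s / 3) := by
        rw [intervalIntegral.integral_add ((by fun_prop : Continuous _).intervalIntegrable _ _)
          ((by fun_prop : Continuous _).intervalIntegrable _ _), integral_exp_neg_sub_div]
        ring
    _ ≤ 6 := by linarith [integral_exp_neg_div_le (d : ℝ) (by norm_num : (0 : ℝ) < 3)]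
end

section
/- Let L be the Laplacian of a connected regular graph on a finite vertex set V, with eigenvalues 0 = λ₁ < λ₂ < λ₃ ≤ … ≤ λ_{|V|} and orthonormal eigenvectors f₁, …, f_{|V|}, where f₁ is constant and λ₂ is a simple eigenvalue. Suppose f₂(v) > f₂(u) > 0 for some vertices u, v. Then there exists t > 0 such that (e^{-tL}δ_u)(v) > (e^{-tL}δ_u)(u), where δ_u is the indicator vector of u. -/
/-!
In the orthonormal eigenbasis the heat kernel expands as
`(e^{-tL} δ_u)(w) = ∑ᵢ e^{-tλᵢ} fᵢ(u) fᵢ(w)`, so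
`(e^{-tL} δ_u)(v) - (e^{-tL} δ_u)(u) = ∑ᵢ e^{-tλᵢ} fᵢ(u) (fᵢ(v) - fᵢ(u))`.
The term of the constant `f₁` vanishes, the term of `f₂` is positive, and every other term
decays strictly faster because `λ₂ < λ₃ ≤ λᵢ`; so the `f₂` term dominates for large `t`.
(In Lean the eigenvectors are indexed from `0`, so `f₁, f₂` are `f 0, f 1`.)
-/

open Matrix Filter Topology

section SpectralExpansion

variable {V : Type*} [Fintype V] [DecidableEq V]

theorem Matrix.exp_eq_transpose_mul_diagonal_mul {L F : Matrix V V ℝ} {d : V → ℝ}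
    (hF : F * Fᵀ = 1) (hLF : L * Fᵀ = Fᵀ * diagonal d) :
    NormedSpace.exp L = Fᵀ * diagonal (fun w => Real.exp (d w)) * F := by
  have hFinv : F⁻¹ = Fᵀ := inv_eq_right_inv hF
  have hL : L = F⁻¹ * diagonal d * F := by
    rw [hFinv, ← hLF, Matrix.mul_assoc, mul_eq_one_comm.mp hF, Matrix.mul_one]
  rw [hL, exp_conj' _ _ (.of_mul_eq_one _ hF), exp_diagonal, hFinv, Pi.exp_def,
    Real.exp_eq_exp_ℝ]

theorem Matrix.exp_mulVec_single_apply_eq_sum {ι : Type*} [Fintype ι] [DecidableEq ι]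
    (hcard : Fintype.card ι = Fintype.card V) {L : Matrix V V ℝ} {lam : ι → ℝ} {f : ι → V → ℝ}
    (heig : ∀ i, L *ᵥ f i = lam i • f i)
    (horth : ∀ i j, ∑ w, f i w * f j w = if i = j then (1 : ℝ) else 0) (u w : V) :
    (NormedSpace.exp L *ᵥ Pi.single u 1) w = ∑ i, Real.exp (lam i) * (f i u * f i w) := by
  obtain ⟨e⟩ : Nonempty (V ≃ ι) := Fintype.card_eq.mp hcard.symm
  let F : Matrix V V ℝ := of fun x => f (e x)
  have hF : F * Fᵀ = 1 := by
    ext x y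
    simp [F, mul_apply, horth, one_apply]
  have hLF : L * Fᵀ = Fᵀ * diagonal (fun x => lam (e x)) := by
    ext w x
    rw [mul_diagonal]
    simpa [F, mul_apply, mulVec, dotProduct, mul_comm] using congrFun (heig (e x)) w
  rw [exp_eq_transpose_mul_diagonal_mul hF hLF, mulVec_single_one, col_apply, mul_apply,
    ← e.sum_comp]
  refine Finset.sum_congr rfl fun x _ => ?_
  simp only [F, mul_diagonal, transpose_apply, of_apply]
  ring

end SpectralExpansion

theorem eventually_pos_sum_exp_neg_mul {ι : Type*} [Fintype ι] {lam c : ι → ℝ} {i₁ : ι}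
    (hc : 0 < c i₁) (hgap : ∀ i ≠ i₁, c i = 0 ∨ lam i₁ < lam i) :
    ∀ᶠ t in atTop, 0 < ∑ i, Real.exp (-t * lam i) * c i := by
  classical
  have hlim : Tendsto (fun t => ∑ i, Real.exp (-(t * (lam i - lam i₁))) * c i) atTop
      (𝓝 (∑ i, if i = i₁ then c i else 0)) := by
    refine tendsto_finsetSum _ fun i _ => ?_
    split_ifs with hi
    · simp [hi]
    rcases hgap i hi with h0 | hlt
    · simp [h0]
    · simpa using (Real.tendsto_exp_neg_atTop_nhds_zero.comp
        (tendsto_id.atTop_mul_const (sub_pos.2 hlt))).mul_const (c i)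
  rw [Finset.sum_ite_eq' Finset.univ i₁ c, if_pos (Finset.mem_univ _)] at hlim
  filter_upwards [hlim.eventually_const_lt hc] with t ht
  have hfactor : ∑ i, Real.exp (-t * lam i) * c i
      = Real.exp (-t * lam i₁) * ∑ i, Real.exp (-(t * (lam i - lam i₁))) * c i := by
    rw [Finset.mul_sum]
    refine Finset.sum_congr rfl fun i _ => ?_
    rw [← mul_assoc, ← Real.exp_add]
    ring_nf
  rw [hfactor]
  exact mul_pos (Real.exp_pos _) ht

theorem laplacian_ratio_exceeds_one {V : Type*} [Fintype V] [DecidableEq V]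
    (L : Matrix V V ℝ)
    (n : ℕ) (hn : n = Fintype.card V) (hn3 : 3 ≤ n)
    (lam : Fin n → ℝ) (f : Fin n → V → ℝ)
    (heig : ∀ i, L.mulVec (f i) = lam i • f i)
    (horth : ∀ i j, ∑ w, f i w * f j w = if i = j then (1 : ℝ) else 0)
    (hmono : Monotone lam)
    (hlam23 : lam ⟨1, by omega⟩ < lam ⟨2, by omega⟩)
    (hconst : ∀ w w' : V, f ⟨0, by omega⟩ w = f ⟨0, by omega⟩ w')
    (u v : V)
    (hf2 : f ⟨1, by omega⟩ v > f ⟨1, by omega⟩ u ∧ f ⟨1, by omega⟩ u > 0) :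
    ∃ t : ℝ, 0 < t ∧
      (NormedSpace.exp (-t • L)).mulVec (Pi.single u 1) v
        > (NormedSpace.exp (-t • L)).mulVec (Pi.single u 1) u := by
  have hgap : ∀ i ≠ ⟨1, by omega⟩, f i u * (f i v - f i u) = 0 ∨ lam ⟨1, by omega⟩ < lam i := by
    intro i hi
    by_cases hi0 : i = ⟨0, by omega⟩
    · left
      rw [hi0, hconst v u, sub_self, mul_zero]
    · right
      have hi2 : (⟨2, by omega⟩ : Fin n) ≤ i := by
        simp only [ne_eq, Fin.ext_iff] at hi hi0
        change 2 ≤ i.val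
        omega
      exact hlam23.trans_le (hmono hi2)
  obtain ⟨t, hpos, ht⟩ := ((eventually_pos_sum_exp_neg_mul (c := fun i => f i u * (f i v - f i u))
    (mul_pos hf2.2 (sub_pos.2 hf2.1)) hgap).and (eventually_gt_atTop 0)).exists
  have heig_t : ∀ i, (-t • L) *ᵥ f i = (-t * lam i) • f i := fun i => by
    rw [smul_mulVec, heig, smul_smul]
  have hkernel := exp_mulVec_single_apply_eq_sum (by simp [hn]) heig_t horth u
  refine ⟨t, ht, sub_pos.1 ?_⟩
  rw [hkernel v, hkernel u, ← Finset.sum_sub_distrib]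
  exact hpos.trans_eq (Finset.sum_congr rfl fun i _ => by ring)
end
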